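/- Let 0 < a < 1 and Ω := (0,a)² ⊂ ℝ². For j ∈ ℕ define u_j : Ω → ℝ² by u_j(x₁,x₂) := j^{−1/2} (1 − x₂)^j ( sin(j x₁), cos(j x₁) ). Then: (i) u_j → 0 uniformly on Ω as j → ∞; (ii) sup_j ∫_Ω |∇u_j(x)|² dx < +∞; and (iii) lim_{j→∞} ∫_Ω det ∇u_j(x) dx = −a/2. In particular, the functional u ↦ ∫_Ω det ∇u dx is not sequentially weakly lower semicontinuous on W^{1,2}(Ω;ℝ²), since ∫_Ω det ∇0 dx = 0 > −a/2. -/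

import Mathlib

open MeasureTheory Filter Topology Metric Bornology
open scoped ENNReal NNReal

noncomputable section

/-- The (a.e.-defined) gradient of a map `u : ℝⁿ → ℝᵐ`, identified with an `m × n` matrix. -/
def grad {n m : ℕ} (u : EuclideanSpace ℝ (Fin n) → EuclideanSpace ℝ (Fin m))
    (x : EuclideanSpace ℝ (Fin n)) : Matrix (Fin m) (Fin n) ℝ :=
  Matrix.of fun i j => fderiv ℝ u x (EuclideanSpace.single j 1) i

/-- The sequence `u_j(x₁,x₂) = j^{-1/2} (1 - x₂)^j (sin(j x₁), cos(j x₁))`. -/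
def useq (j : ℕ) (x : EuclideanSpace ℝ (Fin 2)) : EuclideanSpace ℝ (Fin 2) :=
  WithLp.toLp 2 fun i => ((j : ℝ) ^ (-(1:ℝ)/2)) * (1 - x 1) ^ j *
    (if i = (0 : Fin 2) then Real.sin (j * x 0) else Real.cos (j * x 0))

/-! The maps `u_j` have the form `r(x₂) (sin θ(x₁), cos θ(x₁))` with `r(t) = j^{-1/2} (1 - t)^j`
and `θ(s) = j s`; for such maps `det ∇u = r r' θ'` and `|∇u|² = (r θ')² + r'²`. This gives
`det ∇u_j = -j (1 - x₂)^{2j-1}` and `|∇u_j|² = j ((1 - x₂)^{2j} + (1 - x₂)^{2j-2})`.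
Integrating over `x₂ ∈ (0, a)` produces a factor `1/(2j)` that cancels the `j`, so the energies
stay below `2a` while `∫_Ω det ∇u_j = a ((1 - a)^{2j} - 1)/2 → -a/2`. Finally
`|u_j| ≤ j^{-1/2} → 0`. -/

open Real

local notation "E²" => EuclideanSpace ℝ (Fin 2)

theorem grad_apply_eq_fderiv {n m : ℕ} {u : EuclideanSpace ℝ (Fin n) → EuclideanSpace ℝ (Fin m)}
    {x : EuclideanSpace ℝ (Fin n)} (hu : DifferentiableAt ℝ u x) (i : Fin m) (k : Fin n) :
    grad u x i k = fderiv ℝ (fun y => u y i) x (EuclideanSpace.single k 1) := by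
  have h := ((PiLp.hasFDerivAt_apply 2 (u x) i).comp x hu.hasFDerivAt).fderiv
  rw [show (fun y => u y i) = (fun f : EuclideanSpace ℝ (Fin m) => f i) ∘ u from rfl, h]
  rfl

theorem hasFDerivAt_mul_coord {p q : ℝ → ℝ} {p' q' : ℝ} {x : E²}
    (hp : HasDerivAt p p' (x 1)) (hq : HasDerivAt q q' (x 0)) :
    HasFDerivAt (fun y : E² => p (y 1) * q (y 0))
      ((p (x 1) * q') • (EuclideanSpace.proj 0 : E² →L[ℝ] ℝ) +
        (p' * q (x 0)) • (EuclideanSpace.proj 1 : E² →L[ℝ] ℝ)) x := by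
  have h0 := hq.comp_hasFDerivAt x (PiLp.hasFDerivAt_apply (𝕜 := ℝ) 2 x (0 : Fin 2))
  have h1 := hp.comp_hasFDerivAt x (PiLp.hasFDerivAt_apply (𝕜 := ℝ) 2 x (1 : Fin 2))
  refine (h1.mul h0).congr_fderiv ?_
  ext v
  simp only [Function.comp_apply, add_apply, smul_apply, PiLp.proj_apply, smul_eq_mul]
  ring

theorem fderiv_mul_coord {p q : ℝ → ℝ} {p' q' : ℝ} {x : E²}
    (hp : HasDerivAt p p' (x 1)) (hq : HasDerivAt q q' (x 0)) (k : Fin 2) :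
    fderiv ℝ (fun y : E² => p (y 1) * q (y 0)) x (EuclideanSpace.single k 1) =
      ![p (x 1) * q', p' * q (x 0)] k := by
  rw [(hasFDerivAt_mul_coord hp hq).fderiv]
  fin_cases k <;> simp

def polarMap (r θ : ℝ → ℝ) (x : E²) : E² :=
  WithLp.toLp 2 ![r (x 1) * sin (θ (x 0)), r (x 1) * cos (θ (x 0))]

theorem useq_eq_polarMap (j : ℕ) :
    useq j = polarMap (fun t => (j : ℝ) ^ (-(1:ℝ)/2) * (1 - t) ^ j) (fun s => j * s) := by
  ext x i
  fin_cases i <;> simp [useq, polarMap]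

theorem norm_polarMap (r θ : ℝ → ℝ) (x : E²) : ‖polarMap r θ x‖ = |r (x 1)| := by
  rw [EuclideanSpace.norm_eq, ← sqrt_sq_eq_abs]
  congr 1
  simp only [polarMap, norm_eq_abs, sq_abs, Fin.sum_univ_two, Matrix.cons_val_zero,
    Matrix.cons_val_one, Matrix.cons_val_fin_one]
  linear_combination r (x 1) ^ 2 * sin_sq_add_cos_sq (θ (x 0))

section polarMap

variable {r θ : ℝ → ℝ} {r' θ' : ℝ} {x : E²}

theorem grad_polarMap (hr : HasDerivAt r r' (x 1)) (hθ : HasDerivAt θ θ' (x 0)) :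
    grad (polarMap r θ) x =
      !![r (x 1) * (cos (θ (x 0)) * θ'), r' * sin (θ (x 0));
        r (x 1) * (-sin (θ (x 0)) * θ'), r' * cos (θ (x 0))] := by
  have hsin := fderiv_mul_coord hr hθ.sin
  have hcos := fderiv_mul_coord hr hθ.cos
  have hdiff : DifferentiableAt ℝ (polarMap r θ) x := by
    refine (differentiableAt_piLp 2).2 fun i => ?_
    fin_cases i
    · exact (hasFDerivAt_mul_coord hr hθ.sin).differentiableAt
    · exact (hasFDerivAt_mul_coord hr hθ.cos).differentiableAt
  ext i k
  rw [grad_apply_eq_fderiv hdiff]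
  fin_cases i
  · simpa [polarMap] using hsin k
  · simpa [polarMap] using hcos k

theorem det_grad_polarMap (hr : HasDerivAt r r' (x 1)) (hθ : HasDerivAt θ θ' (x 0)) :
    (grad (polarMap r θ) x).det = r (x 1) * r' * θ' := by
  rw [grad_polarMap hr hθ, Matrix.det_fin_two_of]
  linear_combination (r (x 1) * r' * θ') * sin_sq_add_cos_sq (θ (x 0))

theorem sum_sq_grad_polarMap (hr : HasDerivAt r r' (x 1)) (hθ : HasDerivAt θ θ' (x 0)) :
    ∑ i, ∑ k, grad (polarMap r θ) x i k ^ 2 = (r (x 1) * θ') ^ 2 + r' ^ 2 := by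
  simp only [grad_polarMap hr hθ, Fin.sum_univ_two, Matrix.of_apply, Matrix.cons_val',
    Matrix.cons_val_zero, Matrix.cons_val_one, Matrix.empty_val', Matrix.cons_val_fin_one]
  linear_combination ((r (x 1) * θ') ^ 2 + r' ^ 2) * sin_sq_add_cos_sq (θ (x 0))

end polarMap

-- `0 ^ (-1/2) = 0` in Mathlib, so this also covers `x = 0`, i.e. the index `j = 0` below.
theorem sq_rpow_neg_half_mul_self {x : ℝ} (hx : 0 ≤ x) : (x ^ (-(1:ℝ)/2) * x) ^ 2 = x := by
  rcases hx.eq_or_lt with rfl | hx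
  · simp
  · rw [← rpow_add_one hx.ne', ← rpow_natCast, ← rpow_mul hx.le]
    norm_num

section useq

variable (j : ℕ) (x : E²)

theorem hasDerivAt_useq_radius (t : ℝ) :
    HasDerivAt (fun t => (j : ℝ) ^ (-(1:ℝ)/2) * (1 - t) ^ j)
      ((j : ℝ) ^ (-(1:ℝ)/2) * (j * (1 - t) ^ (j - 1) * -1)) t :=
  (((hasDerivAt_id t).const_sub 1).pow j).const_mul _

theorem det_grad_useq : (grad (useq j) x).det = -(j * (1 - x 1) ^ (2 * j - 1)) := by
  rw [useq_eq_polarMap, det_grad_polarMap (hasDerivAt_useq_radius j (x 1))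
    ((hasDerivAt_id' (x 0)).const_mul (j : ℝ))]
  have hj := sq_rpow_neg_half_mul_self j.cast_nonneg
  rw [show 2 * j - 1 = j + (j - 1) by omega, pow_add]
  linear_combination (-(1 - x 1) ^ j * (1 - x 1) ^ (j - 1)) * hj

theorem sum_sq_grad_useq :
    ∑ i, ∑ k, grad (useq j) x i k ^ 2 = j * ((1 - x 1) ^ (2 * j) + (1 - x 1) ^ (2 * (j - 1))) := by
  rw [useq_eq_polarMap, sum_sq_grad_polarMap (hasDerivAt_useq_radius j (x 1))
    ((hasDerivAt_id' (x 0)).const_mul (j : ℝ))]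
  have hj := sq_rpow_neg_half_mul_self j.cast_nonneg
  rw [pow_mul', pow_mul']
  linear_combination (((1 - x 1) ^ j) ^ 2 + ((1 - x 1) ^ (j - 1)) ^ 2) * hj

end useq

theorem tendsto_natCast_rpow_neg_half :
    Tendsto (fun j : ℕ => (j : ℝ) ^ (-(1:ℝ)/2)) atTop (𝓝 0) := by
  have h := (tendsto_rpow_neg_atTop (y := 1/2) (by norm_num)).comp tendsto_natCast_atTop_atTop
  simpa [Function.comp_def, neg_div] using h

theorem tendstoUniformlyOn_useq :
    TendstoUniformlyOn useq 0 atTop {x : E² | x 1 ∈ Set.Icc 0 2} := by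
  rw [Metric.tendstoUniformlyOn_iff]
  intro ε hε
  filter_upwards [tendsto_natCast_rpow_neg_half.eventually_lt_const hε] with j hj x hx
  have hx' : |1 - x 1| ≤ 1 := abs_le.2 ⟨by linarith [hx.2], by linarith [hx.1]⟩
  calc dist ((0 : ℕ → E² → E²) j x) (useq j x) = |(j : ℝ) ^ (-(1:ℝ)/2)| * |1 - x 1| ^ j := by
        rw [Pi.zero_apply, Pi.zero_apply, dist_zero_left, useq_eq_polarMap, norm_polarMap,
          abs_mul, abs_pow]
    _ ≤ (j : ℝ) ^ (-(1:ℝ)/2) := by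
        rw [abs_of_nonneg (by positivity)]
        exact mul_le_of_le_one_right (by positivity) (pow_le_one₀ (abs_nonneg _) hx')
    _ < ε := hj

theorem setIntegral_rect_comp_snd (s t : Set ℝ) (g : ℝ → ℝ) :
    ∫ x in {x : E² | x 0 ∈ s ∧ x 1 ∈ t}, g (x 1) = volume.real s * ∫ y in t, g y := by
  let e : E² ≃ᵐ ℝ × ℝ :=
    (MeasurableEquiv.toLp 2 (Fin 2 → ℝ)).symm.trans MeasurableEquiv.finTwoArrow
  have he : MeasurePreserving e volume (volume.prod volume) :=
    (volume_preserving_finTwoArrow ℝ).comp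
      (EuclideanSpace.volume_preserving_symm_measurableEquiv_toLp (Fin 2))
  have h := he.setIntegral_preimage_emb e.measurableEmbedding (fun z => 1 * g z.2) (s ×ˢ t)
  rw [setIntegral_prod_mul (fun _ => (1 : ℝ)) g s t] at h
  simp only [one_mul, setIntegral_const, smul_eq_mul, mul_one] at h
  exact h

theorem setIntegral_Ioo_one_sub_pow {a : ℝ} (ha : 0 ≤ a) (n : ℕ) :
    ∫ t in Set.Ioo 0 a, (1 - t) ^ n = (1 - (1 - a) ^ (n + 1)) / (n + 1) := by
  rw [← integral_Ioc_eq_integral_Ioo, ← intervalIntegral.integral_of_le ha,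
    intervalIntegral.integral_comp_sub_left (fun s => s ^ n) 1]
  simp [integral_pow]

theorem mul_setIntegral_Ioo_one_sub_pow_le {a c : ℝ} (ha0 : 0 ≤ a) (ha1 : a ≤ 1) {n : ℕ}
    (hc0 : 0 ≤ c) (hc : c ≤ n + 1) : c * ∫ t in Set.Ioo 0 a, (1 - t) ^ n ≤ 1 := by
  have hq : 0 ≤ (1 - a) ^ (n + 1) := pow_nonneg (by linarith) _
  rw [setIntegral_Ioo_one_sub_pow ha0, mul_div_assoc', div_le_one (by positivity)]
  nlinarith

section rectangle

variable {a : ℝ} (j : ℕ)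

theorem setIntegral_det_grad_useq (ha : 0 ≤ a) :
    ∫ x in {x : E² | x 0 ∈ Set.Ioo 0 a ∧ x 1 ∈ Set.Ioo 0 a}, (grad (useq j) x).det =
      a * (((1 - a) ^ 2) ^ j - 1) / 2 := by
  simp_rw [det_grad_useq]
  rw [setIntegral_rect_comp_snd _ _ (fun t => -(j * (1 - t) ^ (2 * j - 1))),
    volume_real_Ioo_of_le ha, integral_neg, integral_const_mul, setIntegral_Ioo_one_sub_pow ha]
  rcases j with _ | j
  · simp
  · rw [show 2 * (j + 1) - 1 = 2 * j + 1 by omega, show 2 * j + 1 + 1 = 2 * (j + 1) by ring,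
      pow_mul]
    push_cast
    field_simp
    ring

theorem setIntegral_sum_sq_grad_useq_le (ha0 : 0 ≤ a) (ha1 : a ≤ 1) :
    ∫ x in {x : E² | x 0 ∈ Set.Ioo 0 a ∧ x 1 ∈ Set.Ioo 0 a},
      ∑ i, ∑ k, grad (useq j) x i k ^ 2 ≤ 2 * a := by
  have hint (n : ℕ) : IntegrableOn (fun t : ℝ => (1 - t) ^ n) (Set.Ioo 0 a) :=
    (by fun_prop : Continuous fun t : ℝ => (1 - t) ^ n).integrableOn_Icc.mono_set
      Set.Ioo_subset_Icc_self
  simp_rw [sum_sq_grad_useq]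
  rw [setIntegral_rect_comp_snd _ _ (fun t => j * ((1 - t) ^ (2 * j) + (1 - t) ^ (2 * (j - 1)))),
    volume_real_Ioo_of_le ha0, integral_const_mul, integral_add (hint _) (hint _), mul_add]
  have h₁ := mul_setIntegral_Ioo_one_sub_pow_le ha0 ha1 (n := 2 * j) j.cast_nonneg
    (by push_cast; linarith [(j.cast_nonneg : (0:ℝ) ≤ j)])
  have h₂ := mul_setIntegral_Ioo_one_sub_pow_le ha0 ha1 (n := 2 * (j - 1)) j.cast_nonneg
    (by exact_mod_cast (show j ≤ 2 * (j - 1) + 1 by omega))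
  nlinarith

end rectangle

/-- Murat's example: on `Ω = (0,a)²` with `0 < a < 1`, the maps `u_j` (i) converge to `0`
uniformly on `Ω`, (ii) have uniformly bounded Dirichlet energies
`∫_Ω |∇u_j|² dx` (Frobenius norm squared), and (iii)
`∫_Ω det ∇u_j dx → −a/2`; in particular `u ↦ ∫_Ω det ∇u` is not sequentially
weakly lower semicontinuous on `W^{1,2}(Ω;ℝ²)` since `∫_Ω det ∇0 = 0 > −a/2`. -/
theorem stmt5 (a : ℝ) (ha0 : 0 < a) (ha1 : a < 1)
    (Ω : Set (EuclideanSpace ℝ (Fin 2)))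
    (hΩ : Ω = {x | x 0 ∈ Set.Ioo (0:ℝ) a ∧ x 1 ∈ Set.Ioo (0:ℝ) a}) :
    TendstoUniformlyOn useq 0 atTop Ω ∧
    (∃ M : ℝ, ∀ j : ℕ, (∫ x in Ω, ∑ i, ∑ k, (grad (useq j) x i k) ^ 2) ≤ M) ∧
    Tendsto (fun j : ℕ => ∫ x in Ω, (grad (useq j) x).det) atTop (nhds (-a/2)) := by
  subst hΩ
  refine ⟨tendstoUniformlyOn_useq.mono fun x hx => ⟨hx.2.1.le, by linarith [hx.2.2]⟩,
    ⟨2 * a, fun j => setIntegral_sum_sq_grad_useq_le j ha0.le ha1.le⟩, ?_⟩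
  simp_rw [setIntegral_det_grad_useq _ ha0.le]
  have hq : Tendsto (fun j : ℕ => ((1 - a) ^ 2) ^ j) atTop (𝓝 0) :=
    tendsto_pow_atTop_nhds_zero_of_lt_one (by positivity) (by nlinarith)
  simpa using ((hq.sub_const 1).const_mul a).div_const 2
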